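/- arXiv:1506.05403 — 5 statements merged into one kernel-verified Lean document; each statement's English description precedes it below -/
import Mathlib

section
/- For any invertible d×d complex matrix g, the real-linear map H ↦ gᵀHg on the space Sym_d(ℂ) of symmetric d×d complex matrices (viewed as a real vector space) has Jacobian determinant of absolute value |det g|^{2(d+1)}. -/
open Matrix

/-- The symmetric `d×d` complex matrices, as a real subspace of the space of matrices. -/
noncomputable def symR (d : ℕ) : Submodule ℝ (Matrix (Fin d) (Fin d) ℂ) where
  carrier := {H | Hᵀ = H}
  add_mem' := by
    intro a b ha hb
    simp only [Set.mem_setOf_eq] at *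
    simp [transpose_add, ha, hb]
  zero_mem' := by simp
  smul_mem' := by
    intro c a ha
    simp only [Set.mem_setOf_eq] at *
    simp [transpose_smul, ha]

/-- The real-linear map `H ↦ gᵀ H g` on `d×d` complex matrices. -/
noncomputable def congrMapR {d : ℕ} (g : Matrix (Fin d) (Fin d) ℂ) :
    Matrix (Fin d) (Fin d) ℂ →ₗ[ℝ] Matrix (Fin d) (Fin d) ℂ where
  toFun H := gᵀ * H * g
  map_add' := by
    intro H₁ H₂
    simp [Matrix.mul_add, Matrix.add_mul]
  map_smul' := by
    intro c H
    simp [Matrix.mul_smul, Matrix.smul_mul]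

theorem congrMapR_mem {d : ℕ} (g : Matrix (Fin d) (Fin d) ℂ) :
    ∀ H ∈ symR d, congrMapR g H ∈ symR d := by
  intro H hH
  have hH' : Hᵀ = H := hH
  show (gᵀ * H * g)ᵀ = gᵀ * H * g
  rw [transpose_mul, transpose_mul, transpose_transpose, hH', Matrix.mul_assoc]

/-- The real-linear endomorphism `H ↦ gᵀ H g` of the real vector space `Sym_d(ℂ)`. -/
noncomputable def symCongr {d : ℕ} (g : Matrix (Fin d) (Fin d) ℂ) : symR d →ₗ[ℝ] symR d :=
  (congrMapR g).restrict (congrMapR_mem g)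

/-!
The real map is the restriction of scalars of the `ℂ`-linear map `H ↦ gᵀ H g` on `Sym_d(ℂ)`, so its
determinant is `normSq` of the complex determinant. The complex determinant is multiplicative in
`g`, so it suffices to compute it on diagonal matrices and transvections. In the coordinates
`H i j` indexed by unordered pairs `{i, j}`, `diagonal u` acts diagonally by `u i * u j`, and each
index occurs `d + 1` times among these pairs (twice in `{i, i}`); this gives `(det g) ^ (d + 1)`.
Transvections contribute `1`, since they are conjugate to their own squares.
-/

theorem Finset.prod_sym2_lift_mul {ι M : Type*} [CommMonoid M] (s : Finset ι) (f : ι → M) :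
    ∏ z ∈ s.sym2, Sym2.lift ⟨fun i j => f i * f j, fun _ _ => mul_comm _ _⟩ z =
      ∏ i ∈ s, f i ^ (s.card + 1) := by
  induction s using Finset.cons_induction with
  | empty => simp
  | cons a s ha ih =>
    rw [sym2_cons, prod_disjUnion, prod_map, ih, prod_cons, prod_cons, card_cons]
    simp only [Sym2.mkEmbedding_apply, Sym2.lift_mk, prod_mul_distrib, prod_const, pow_succ]
    ac_rfl

namespace Matrix

section Symmetric

variable (R n : Type*) [CommSemiring R]

def symmetricSubmodule : Submodule R (Matrix n n R) where
  carrier := {H | Hᵀ = H}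
  add_mem' {A B} hA hB := by simp_all [transpose_add]
  zero_mem' := transpose_zero
  smul_mem' c H hH := by simp_all [transpose_smul]

variable {R n}

theorem apply_comm_of_mem_symmetricSubmodule (H : symmetricSubmodule R n) (i j : n) :
    (H : Matrix n n R) i j = (H : Matrix n n R) j i :=
  congr_fun₂ H.2 j i

def symmetricEquivSym2 : symmetricSubmodule R n ≃ₗ[R] (Sym2 n → R) where
  toFun H := Sym2.lift ⟨fun i j => (H : Matrix n n R) i j, apply_comm_of_mem_symmetricSubmodule H⟩
  invFun c := ⟨of fun i j => c s(i, j), by ext i j; simp [Sym2.eq_swap]⟩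
  map_add' H K := by ext z; induction z using Sym2.ind; simp
  map_smul' r H := by ext z; induction z using Sym2.ind; simp
  left_inv H := by ext; simp
  right_inv c := by ext z; induction z using Sym2.ind; simp

@[simp]
theorem symmetricEquivSym2_apply_mk (H : symmetricSubmodule R n) (i j : n) :
    symmetricEquivSym2 H s(i, j) = (H : Matrix n n R) i j := rfl

@[simp]
theorem coe_symmetricEquivSym2_symm_apply (c : Sym2 n → R) (i j : n) :
    (symmetricEquivSym2.symm c : Matrix n n R) i j = c s(i, j) := rfl

variable [Fintype n]

def symmetricCongr (g : Matrix n n R) : symmetricSubmodule R n →ₗ[R] symmetricSubmodule R n where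
  toFun H := ⟨gᵀ * (H : Matrix n n R) * g, by
    change (gᵀ * (H : Matrix n n R) * g)ᵀ = _
    rw [transpose_mul, transpose_mul, transpose_transpose, H.2, Matrix.mul_assoc]⟩
  map_add' H K := by ext1; simp [Matrix.mul_add, Matrix.add_mul]
  map_smul' c H := by ext1; simp

@[simp]
theorem coe_symmetricCongr_apply (g : Matrix n n R) (H : symmetricSubmodule R n) :
    (symmetricCongr g H : Matrix n n R) = gᵀ * H * g := rfl

@[simp]
theorem symmetricCongr_one [DecidableEq n] :
    symmetricCongr (1 : Matrix n n R) = LinearMap.id := by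
  ext1 H; ext1; simp

theorem symmetricCongr_mul (A B : Matrix n n R) :
    symmetricCongr (A * B) = symmetricCongr B ∘ₗ symmetricCongr A := by
  ext1 H; ext1; simp [transpose_mul, Matrix.mul_assoc]

theorem symmetricEquivSym2_symmetricCongr_diagonal [DecidableEq n] (u : n → R)
    (H : symmetricSubmodule R n) (z : Sym2 n) :
    symmetricEquivSym2 (symmetricCongr (diagonal u) H) z =
      Sym2.lift ⟨fun i j => u i * u j, fun _ _ => mul_comm _ _⟩ z * symmetricEquivSym2 H z := by
  induction z using Sym2.ind
  simp [mul_diagonal, diagonal_mul]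
  ring

end Symmetric

section Determinant

variable {R n : Type*} [CommRing R] [Fintype n]

theorem det_symmetricCongr_mul (A B : Matrix n n R) :
    LinearMap.det (symmetricCongr (A * B)) =
      LinearMap.det (symmetricCongr A) * LinearMap.det (symmetricCongr B) := by
  rw [symmetricCongr_mul, LinearMap.det_comp, mul_comm]

variable [DecidableEq n]

theorem det_symmetricCongr_diagonal (u : n → R) :
    LinearMap.det (symmetricCongr (diagonal u)) = (∏ i, u i) ^ (Fintype.card n + 1) := by
  have hconj : symmetricEquivSym2.toLinearMap ∘ₗ symmetricCongr (diagonal u) ∘ₗ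
      symmetricEquivSym2.symm.toLinearMap =
        toLin' (diagonal fun z => Sym2.lift ⟨fun i j => u i * u j, fun _ _ => mul_comm _ _⟩ z) := by
    refine LinearMap.ext fun c => funext fun z => ?_
    simp only [LinearMap.comp_apply, LinearEquiv.coe_coe, toLin'_apply, mulVec_diagonal,
      symmetricEquivSym2_symmetricCongr_diagonal, LinearEquiv.apply_symm_apply]
  rw [← LinearMap.det_conj _ symmetricEquivSym2, hconj, LinearMap.det_toLin', det_diagonal,
    ← Finset.sym2_univ (α := n) Sym2.instFintype, Finset.prod_sym2_lift_mul, Finset.prod_pow,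
    Finset.card_univ]

theorem diagonal_update_one_mul_transvection {i j : n} (hij : i ≠ j) (a c : R) :
    diagonal (Function.update 1 i a) * transvection i j c =
      transvection i j (a * c) * diagonal (Function.update 1 i a) := by
  simp only [transvection, Matrix.mul_add, Matrix.add_mul, Matrix.mul_one, Matrix.one_mul]
  congr 1
  ext k l
  rw [diagonal_mul, mul_diagonal, single_apply, single_apply]
  split_ifs with h
  · simp [← h.1, ← h.2, hij.symm]
  · simp

/-- Scaling row `i` by `2` conjugates `transvection i j c` to its square `transvection i j (2 * c)`,
so `det (symmetricCongr (transvection i j c))` is an idempotent unit. -/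
theorem det_symmetricCongr_transvection (h2 : IsUnit (2 : R)) {i j : n} (hij : i ≠ j) (c : R) :
    LinearMap.det (symmetricCongr (transvection i j c)) = 1 := by
  set δ : R → R := fun c => LinearMap.det (symmetricCongr (transvection i j c))
  have hadd (a b : R) : δ (a + b) = δ a * δ b := by
    simp only [δ, ← det_symmetricCongr_mul, transvection_mul_transvection_same _ _ hij]
  have hunit : IsUnit (δ c) :=
    IsUnit.of_mul_eq_one (δ (-c)) (by rw [← hadd, add_neg_cancel]; simp [δ])
  have hdiag :
      IsUnit (LinearMap.det (symmetricCongr (diagonal (Function.update 1 i (2 : R))))) := by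
    rw [det_symmetricCongr_diagonal, Finset.prod_update_of_mem (Finset.mem_univ i)]
    simpa using h2
  have hconj : δ c = δ (2 * c) := by
    have := congrArg (LinearMap.det ∘ symmetricCongr)
      (diagonal_update_one_mul_transvection hij (2 : R) c)
    simp only [Function.comp_apply, det_symmetricCongr_mul] at this
    exact hdiag.mul_left_cancel (this.trans (mul_comm _ _))
  have hidem : δ c * δ c = δ c * 1 := by
    rw [mul_one, ← hadd, ← two_mul, ← hconj]
  exact hunit.mul_left_cancel hidem

end Determinant

theorem det_symmetricCongr {K n : Type*} [Field K] [Fintype n] [DecidableEq n] (h2 : (2 : K) ≠ 0)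
    (g : Matrix n n K) :
    LinearMap.det (symmetricCongr g) = g.det ^ (Fintype.card n + 1) := by
  induction g using diagonal_transvection_induction with
  | hdiag u _ => rw [det_symmetricCongr_diagonal, det_diagonal]
  | htransvec t => rw [t.det, one_pow, TransvectionStruct.toMatrix,
      det_symmetricCongr_transvection h2.isUnit t.hij]
  | hmul A B hA hB => rw [det_symmetricCongr_mul, hA, hB, det_mul, mul_pow]

end Matrix

def symREquiv (d : ℕ) : symR d ≃ₗ[ℝ] symmetricSubmodule ℂ (Fin d) where
  toFun H := ⟨H, H.2⟩
  invFun H := ⟨H, H.2⟩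
  map_add' _ _ := rfl
  map_smul' _ _ := rfl

theorem symREquiv_conj_symCongr {d : ℕ} (g : Matrix (Fin d) (Fin d) ℂ) :
    (symREquiv d).toLinearMap ∘ₗ symCongr g ∘ₗ (symREquiv d).symm.toLinearMap =
      (symmetricCongr g).restrictScalars ℝ :=
  rfl

theorem det_symCongr {d : ℕ} (g : Matrix (Fin d) (Fin d) ℂ) :
    LinearMap.det (symCongr g) = Complex.normSq g.det ^ (d + 1) := by
  rw [← LinearMap.det_conj _ (symREquiv d), symREquiv_conj_symCongr,
    LinearMap.det_restrictScalars, Algebra.norm_complex_apply, det_symmetricCongr two_ne_zero,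
    Fintype.card_fin, map_pow]

theorem abs_det_symCongr_general (d : ℕ) (g : Matrix (Fin d) (Fin d) ℂ) :
    |LinearMap.det (symCongr g)| = ‖g.det‖ ^ (2 * (d + 1)) := by
  rw [det_symCongr, abs_of_nonneg (pow_nonneg (Complex.normSq_nonneg _) _),
    Complex.normSq_eq_norm_sq, ← pow_mul]

/-- For an invertible `g ∈ GL(d,ℂ)`, the real-linear map `H ↦ gᵀHg` on `Sym_d(ℂ)`
(viewed as a real vector space) has Jacobian determinant of absolute value
`|det g|^(2(d+1))`. -/
theorem abs_det_symCongr (d : ℕ) (g : Matrix (Fin d) (Fin d) ℂ) (hg : IsUnit g) :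
    |LinearMap.det (symCongr g)| = ‖g.det‖ ^ (2 * (d + 1)) :=
  abs_det_symCongr_general d g
end

section
/- Let S be a real invertible diagonal d×d matrix, and Z a unitary symmetric d×d complex matrix such that (S−S^{-1})Z+(S+S^{-1}) is invertible, and let w = det((S−S^{-1})Z+(S+S^{-1})). Then w·det(((S+S^{-1})Z+(S−S^{-1}))((S−S^{-1})Z+(S+S^{-1}))^{-1}) = w̄·det(Z), i.e. det(((S+S^{-1})Z+(S−S^{-1}))((S−S^{-1})Z+(S+S^{-1}))^{-1}) = e^{−2i·Arg(w)}·det(Z). -/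
open Matrix

/-- Let `S` be a real invertible diagonal `d×d` matrix and `Z` a unitary symmetric
`d×d` complex matrix such that `(S−S⁻¹)Z+(S+S⁻¹)` is invertible with determinant `w`.
Then `w · det(((S+S⁻¹)Z+(S−S⁻¹))((S−S⁻¹)Z+(S+S⁻¹))⁻¹) = conj(w) · det(Z)`. -/
theorem det_mobius_diag_action (d : ℕ) (S Z : Matrix (Fin d) (Fin d) ℂ)
    (hSreal : ∀ i j, (S i j).im = 0) (hSdiag : S.IsDiag) (hS : IsUnit S)
    (hZu : Zᴴ * Z = 1) (hZs : Zᵀ = Z)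
    (hw : IsUnit ((S - S⁻¹) * Z + (S + S⁻¹))) :
    ((S - S⁻¹) * Z + (S + S⁻¹)).det *
        (((S + S⁻¹) * Z + (S - S⁻¹)) * ((S - S⁻¹) * Z + (S + S⁻¹))⁻¹).det
      = (starRingEnd ℂ) (((S - S⁻¹) * Z + (S + S⁻¹)).det) * Z.det := by
  set f := starRingEnd ℂ with hf
  set M := (S - S⁻¹) * Z + (S + S⁻¹) with hM
  set N := (S + S⁻¹) * Z + (S - S⁻¹) with hN
  have hSf : S.map f = S := by
    ext i j
    exact Complex.conj_eq_iff_im.mpr (hSreal i j)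
  have hSS : S * S⁻¹ = 1 := mul_nonsing_inv S ((isUnit_iff_isUnit_det S).mp hS)
  have hSinvf : S⁻¹.map f = S⁻¹ := by
    have h1 : S * (S⁻¹.map f) = 1 := by
      calc S * (S⁻¹.map f) = (S.map f) * (S⁻¹.map f) := by rw [hSf]
        _ = (S * S⁻¹).map f := (Matrix.map_mul).symm
        _ = (1 : Matrix (Fin d) (Fin d) ℂ).map f := by rw [hSS]
        _ = 1 := Matrix.map_one f (map_zero f) (map_one f)
    exact (inv_eq_right_inv h1).symm
  have hZconj : Z.map f = Zᴴ := by
    ext i j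
    have h : Z j i = Z i j := by
      calc Z j i = Zᵀ i j := rfl
        _ = Z i j := by rw [hZs]
    simp [Matrix.conjTranspose_apply, h, hf]
  have hMconj : f.mapMatrix M = (S - S⁻¹) * Zᴴ + (S + S⁻¹) := by
    simp only [hM, map_add, _root_.map_mul, map_sub, RingHom.mapMatrix_apply, hSf, hSinvf, hZconj]
  have hkey : (f.mapMatrix M) * Z = N := by
    rw [hMconj, add_mul, mul_assoc, hZu, mul_one, hN, add_comm]
  have hdetN : N.det = f M.det * Z.det := by
    rw [← hkey, Matrix.det_mul, RingHom.map_det]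
  have hdetM : M.det ≠ 0 := by
    have := (isUnit_iff_isUnit_det M).mp hw
    exact this.ne_zero
  rw [Matrix.det_mul, Matrix.det_nonsing_inv, ← hdetN]
  field_simp
  rw [Ring.inverse_eq_inv', mul_comm M.det, mul_assoc, mul_inv_cancel₀ hdetM, mul_one]
end

section
/- For every real r > 0 and every real s with 0 ≤ s < e^{−r}, one has ln(e^r(1−s)/(1−e^r s)) ≥ r/(1−s). -/
/-- For every real `r > 0` and every real `s` with `0 ≤ s < e^{−r}`,
`ln(e^r(1−s)/(1−e^r s)) ≥ r/(1−s)`. -/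
theorem log_ineq (r s : ℝ) (hr : 0 < r) (hs0 : 0 ≤ s) (hs : s < Real.exp (-r)) :
    r / (1 - s) ≤ Real.log (Real.exp r * (1 - s) / (1 - Real.exp r * s)) := by
  have her : (1 : ℝ) < Real.exp r := by rw [show (1:ℝ) = Real.exp 0 by simp]; exact Real.exp_lt_exp.mpr hr
  have hs1 : s < 1 := lt_trans hs (by rw [Real.exp_lt_one_iff]; linarith)
  have h1 : (0 : ℝ) < 1 - s := by linarith
  have h2 : (0 : ℝ) < 1 - Real.exp r * s := by
    have : Real.exp r * s < Real.exp r * Real.exp (-r) := by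
      rcases eq_or_lt_of_le hs0 with h | h
      · simp [← h]; positivity
      · exact (mul_lt_mul_iff_right₀ (Real.exp_pos r)).mpr hs
    rw [← Real.exp_add] at this
    simp at this
    linarith
  have ht : (0 : ℝ) < (1 - s) / (1 - Real.exp r * s) := by positivity
  -- log t ≥ 1 - 1/t
  have hlogt : 1 - (1 - Real.exp r * s) / (1 - s) ≤ Real.log ((1 - s) / (1 - Real.exp r * s)) := by
    have := Real.log_le_sub_one_of_pos (show (0:ℝ) < (1 - Real.exp r * s) / (1 - s) by positivity)
    rw [Real.log_div (by linarith) (by linarith)] at this ⊢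
    linarith
  have key : s * (Real.exp r - 1) / (1 - s) ≤ Real.log ((1 - s) / (1 - Real.exp r * s)) := by
    have : 1 - (1 - Real.exp r * s) / (1 - s) = s * (Real.exp r - 1) / (1 - s) := by
      field_simp; ring
    linarith [hlogt, this.symm.le]
  have hrer : r + 1 ≤ Real.exp r := Real.add_one_le_exp r
  have hkey2 : r * s / (1 - s) ≤ s * (Real.exp r - 1) / (1 - s) := by
    apply div_le_div_of_nonneg_right _ h1.le
    nlinarith
  have heq : Real.log (Real.exp r * (1 - s) / (1 - Real.exp r * s)) =
      r + Real.log ((1 - s) / (1 - Real.exp r * s)) := by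
    rw [mul_div_assoc, Real.log_mul (Real.exp_ne_zero r) (ne_of_gt ht), Real.log_exp]
  rw [heq]
  have : r / (1 - s) = r + r * s / (1 - s) := by field_simp; ring
  rw [this]
  linarith
end

section
/- Let ⟨·,·⟩ be the standard Hermitian symplectic form on ℂ^{2d} (conjugate-linear in the first argument, with ⟨φ,ψ⟩ = −conj(⟨ψ,φ⟩)), defined by ⟨e_i, e_{d+i}⟩ = 1 and ⟨e_i,e_j⟩ = 0 for |i−j| ≠ d. Suppose A preserves this form, v is an eigenvector of A with eigenvalue λ of modulus 1, and w is a vector with Aw − λw a nonzero multiple of v. Then ⟨v,v⟩ = 0. -/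
open Matrix

/-- The standard symplectic form matrix `J = [[0, I],[-I, 0]]` in `d×d` blocks. -/
def Jmat (d : ℕ) : Matrix (Fin d ⊕ Fin d) (Fin d ⊕ Fin d) ℂ :=
  fromBlocks 0 1 (-1) 0

/-- The standard Hermitian symplectic form on `ℂ^{2d}`: `⟨φ,ψ⟩ = φᴴJψ`, conjugate-linear
in the first argument; it satisfies `⟨e_i, e_{d+i}⟩ = 1` and `⟨e_i,e_j⟩ = 0` for
`|i−j| ≠ d`, and `⟨φ,ψ⟩ = −conj(⟨ψ,φ⟩)`. -/
noncomputable def hsForm (d : ℕ) (φ ψ : (Fin d ⊕ Fin d) → ℂ) : ℂ :=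
  star φ ⬝ᵥ (Jmat d *ᵥ ψ)

theorem Matrix.star_dotProduct_mulVec_eq_toLinearMapₛₗ₂' {R n m : Type*} [CommSemiring R]
    [StarRing R] [Fintype n] [Fintype m] [DecidableEq n] [DecidableEq m] (M : Matrix n m R)
    (x : n → R) (y : m → R) :
    star x ⬝ᵥ (M *ᵥ y) = toLinearMapₛₗ₂' R (starRingEnd R) (RingHom.id R) M x y := by
  simp only [toLinearMapₛₗ₂'_apply, dotProduct, mulVec, Finset.mul_sum, smul_eq_mul,
    starRingEnd_apply, RingHom.id_apply, Pi.star_apply]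
  exact Finset.sum_congr rfl fun _ _ => Finset.sum_congr rfl fun _ _ => by ring

theorem LinearMap.apply_self_eq_zero_of_jordanChain {K M : Type*} [Field K] [StarRing K]
    [AddCommGroup M] [Module K M] (B : M →ₗ⋆[K] M →ₗ[K] K) (f : M →ₗ[K] M)
    (hf : ∀ x y, B (f x) (f y) = B x y) {lam c : K} (hlam : star lam * lam = 1) (hc : c ≠ 0)
    {v w : M} (hv : f v = lam • v) (hw : f w = lam • w + c • v) :
    B v v = 0 := by
  have key : B v w = star lam * lam * B v w + star lam * c * B v v := by
    calc B v w = B (f v) (f w) := (hf v w).symm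
      _ = _ := by
        simp only [hv, hw, map_add, map_smulₛₗ₂, map_smul, smul_eq_mul, starRingEnd_apply]
        ring
  have hlam₀ : star lam ≠ 0 := left_ne_zero_of_mul_eq_one hlam
  have : star lam * c * B v v = 0 := by linear_combination -key - B v w * hlam
  exact (mul_eq_zero.mp this).resolve_left (mul_ne_zero hlam₀ hc)

/-- If `A` preserves the Hermitian symplectic form, `v` is an eigenvector of `A` with
eigenvalue `λ` of modulus 1, and `Aw − λw` is a nonzero multiple of `v`, then
`⟨v,v⟩ = 0`. -/
theorem eigenvector_isotropic (d : ℕ) (A : Matrix (Fin d ⊕ Fin d) (Fin d ⊕ Fin d) ℂ)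
    (hA : ∀ φ ψ : (Fin d ⊕ Fin d) → ℂ, hsForm d (A *ᵥ φ) (A *ᵥ ψ) = hsForm d φ ψ)
    (lam : ℂ) (hlam : ‖lam‖ = 1) (v w : (Fin d ⊕ Fin d) → ℂ)
    (hv : A *ᵥ v = lam • v)
    (hw : ∃ c : ℂ, c ≠ 0 ∧ A *ᵥ w - lam • w = c • v) :
    hsForm d v v = 0 := by
  obtain ⟨c, hc, hcw⟩ := hw
  have hB (φ ψ) :
      hsForm d φ ψ = toLinearMapₛₗ₂' ℂ (starRingEnd ℂ) (RingHom.id ℂ) (Jmat d) φ ψ :=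
    star_dotProduct_mulVec_eq_toLinearMapₛₗ₂' _ φ ψ
  simp only [hB] at hA ⊢
  have hlam' : star lam * lam = 1 := by simp [Complex.conj_mul', hlam]
  have hAw : A *ᵥ w = lam • w + c • v := by simp [← hcw]
  exact LinearMap.apply_self_eq_zero_of_jordanChain _ A.mulVecLin hA hlam' hc hv hAw
end

section
/- For any real number E and any d×d Hermitian matrices v₁, v₂, the matrix J·(d/dE)[A(v₂,E)A(v₁,E)]·(A(v₁,E))^{-1}(A(v₂,E))^{-1}, where A(v,E) = [[E·I_d − v, −I_d],[I_d, 0]] and J = [[0,I_d],[−I_d,0]], equals −[[I_d, 0],[−(E·I−v₂), I_d]]·[[I_d, −(E·I−v₂)],[0, I_d]], which is negative definite. -/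
open Matrix
open scoped ComplexOrder

/-- The transfer matrix `A(v,E) = [[E·I − v, −I],[I, 0]]` of a Jacobi/Schrödinger
cocycle on the strip. -/
noncomputable def transferA (d : ℕ) (v : Matrix (Fin d) (Fin d) ℂ) (E : ℝ) :
    Matrix (Fin d ⊕ Fin d) (Fin d ⊕ Fin d) ℂ :=
  fromBlocks ((E : ℂ) • 1 - v) (-1) 1 0

/-- The block matrix `P = [[I,0],[0,0]]`, which is `(d/dE) A(v,E)`. -/
def Pblk (d : ℕ) : Matrix (Fin d ⊕ Fin d) (Fin d ⊕ Fin d) ℂ :=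
  fromBlocks 1 0 0 0

/-! With `S = E • 1 - v`, the transfer matrix `[[S, -1], [1, 0]]` has the explicit inverse
`[[0, 1], [-1, S]]`, so the product in the theorem is a block computation in which `S₁` cancels.
The result is `-L Lᴴ` with `L = [[1, 0], [-S₂, 1]]` unitriangular, hence invertible. -/

namespace Matrix

variable {m α : Type*} [Fintype m] [DecidableEq m]

def blockTransfer [Ring α] (S : Matrix m m α) : Matrix (m ⊕ m) (m ⊕ m) α :=
  fromBlocks S (-1) 1 0

section CommRing

variable [CommRing α]

theorem inv_blockTransfer (S : Matrix m m α) :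
    (blockTransfer S)⁻¹ = fromBlocks 0 1 (-1) S :=
  inv_eq_right_inv <| by simp [blockTransfer, fromBlocks_multiply, ← fromBlocks_one]

theorem fromBlocks_mul_derivative_mul_inv_blockTransfer_mul (S₁ S₂ : Matrix m m α) :
    fromBlocks 0 1 (-1) 0 *
        (fromBlocks 1 0 0 0 * blockTransfer S₁ + blockTransfer S₂ * fromBlocks 1 0 0 0) *
        (blockTransfer S₂ * blockTransfer S₁)⁻¹
      = fromBlocks (-1) S₂ S₂ (-1 - S₂ * S₂) := by
  rw [Matrix.mul_inv_rev, inv_blockTransfer, inv_blockTransfer]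
  simp only [blockTransfer, fromBlocks_multiply, fromBlocks_add, fromBlocks_inj]
  refine ⟨?_, ?_, ?_, ?_⟩ <;> noncomm_ring

variable [StarRing α]

theorem neg_fromBlocks_eq_mul_conjTranspose {S : Matrix m m α} (hS : S.IsHermitian) :
    -fromBlocks (-1) S S (-1 - S * S) = fromBlocks 1 0 (-S) 1 * (fromBlocks 1 0 (-S) 1)ᴴ := by
  simp [fromBlocks_conjTranspose, hS.eq, fromBlocks_multiply, fromBlocks_neg]

theorem posDef_neg_fromBlocks [PartialOrder α] [StarOrderedRing α] [NoZeroDivisors α]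
    {S : Matrix m m α} (hS : S.IsHermitian) :
    (-fromBlocks (-1) S S (-1 - S * S)).PosDef := by
  rw [neg_fromBlocks_eq_mul_conjTranspose hS]
  refine PosDef.mul_conjTranspose_self _ (vecMul_injective_of_isUnit ?_)
  simp [isUnit_iff_isUnit_det]

end CommRing

end Matrix

theorem transferA_eq_blockTransfer (d : ℕ) (v : Matrix (Fin d) (Fin d) ℂ) (E : ℝ) :
    transferA d v E = blockTransfer ((E : ℂ) • 1 - v) :=
  rfl

theorem schrodinger_cocycle_monotone_general (d : ℕ) (E : ℝ)
    (v₁ v₂ : Matrix (Fin d) (Fin d) ℂ)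
    (h₂ : v₂.IsHermitian) :
    Jmat d * (Pblk d * transferA d v₁ E + transferA d v₂ E * Pblk d) *
        (transferA d v₂ E * transferA d v₁ E)⁻¹
      = fromBlocks (-1) ((E : ℂ) • 1 - v₂) ((E : ℂ) • 1 - v₂)
          (-1 - ((E : ℂ) • 1 - v₂) * ((E : ℂ) • 1 - v₂)) ∧
    (-(fromBlocks (-1) ((E : ℂ) • 1 - v₂) ((E : ℂ) • 1 - v₂)
          (-1 - ((E : ℂ) • 1 - v₂) * ((E : ℂ) • 1 - v₂)) :
        Matrix (Fin d ⊕ Fin d) (Fin d ⊕ Fin d) ℂ)).PosDef := by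
  have hS : ((E : ℂ) • 1 - v₂).IsHermitian :=
    (isHermitian_one.smul (Complex.conj_ofReal E)).sub h₂
  refine ⟨?_, posDef_neg_fromBlocks hS⟩
  rw [transferA_eq_blockTransfer, transferA_eq_blockTransfer, Jmat, Pblk]
  exact fromBlocks_mul_derivative_mul_inv_blockTransfer_mul _ _

/-- For `E ∈ ℝ` and Hermitian `v₁, v₂`, with `S = E·I − v₂`, the matrix
`J·((d/dE)(A(v₂,E)A(v₁,E)))·(A(v₂,E)A(v₁,E))⁻¹` (the derivative of the product being
`P·A(v₁,E) + A(v₂,E)·P` with `P = (d/dE)A(v,E) = [[I,0],[0,0]]`) equals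
`[[−I, S],[S, −I − S²]]`, and this matrix is negative definite. -/
theorem schrodinger_cocycle_monotone (d : ℕ) (E : ℝ)
    (v₁ v₂ : Matrix (Fin d) (Fin d) ℂ)
    (h₁ : v₁.IsHermitian) (h₂ : v₂.IsHermitian) :
    Jmat d * (Pblk d * transferA d v₁ E + transferA d v₂ E * Pblk d) *
        (transferA d v₂ E * transferA d v₁ E)⁻¹
      = fromBlocks (-1) ((E : ℂ) • 1 - v₂) ((E : ℂ) • 1 - v₂)
          (-1 - ((E : ℂ) • 1 - v₂) * ((E : ℂ) • 1 - v₂)) ∧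
    (-(fromBlocks (-1) ((E : ℂ) • 1 - v₂) ((E : ℂ) • 1 - v₂)
          (-1 - ((E : ℂ) • 1 - v₂) * ((E : ℂ) • 1 - v₂)) :
        Matrix (Fin d ⊕ Fin d) (Fin d ⊕ Fin d) ℂ)).PosDef :=
  schrodinger_cocycle_monotone_general d E v₁ v₂ h₂
end
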